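/- arXiv:1604.06382 — 5 statements merged into one kernel-verified Lean document; each statement's English description precedes it below -/
import Mathlib

section
/- For every finite simple graph G and every integer k ≥ 1, there exists a set of vertices of G that is simultaneously a k-dominating set and a k-independent set of G. -/
open SimpleGraph

/-- `S` is a `k`-dominating set of the subgraph of `G` induced by `U`:
`S ⊆ U` and every vertex of `U` not in `S` has at least `k` neighbors in `S`. -/
def IsKDomOn {V : Type*} (G : SimpleGraph V) (k : ℕ) (U S : Set V) : Prop :=
  S ⊆ U ∧ ∀ v ∈ U, v ∉ S → k ≤ (G.neighborSet v ∩ S).ncard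

/-- `S` is a `k`-independent set of the subgraph of `G` induced by `U`:
`S ⊆ U` and every vertex of `S` has at most `k - 1` neighbors in `S`. -/
def IsKIndOn {V : Type*} (G : SimpleGraph V) (k : ℕ) (U S : Set V) : Prop :=
  S ⊆ U ∧ ∀ v ∈ S, (G.neighborSet v ∩ S).ncard ≤ k - 1

/-- The `k`-domination number of the subgraph of `G` induced by `U`. -/
noncomputable def gammaK {V : Type*} (G : SimpleGraph V) (k : ℕ) (U : Set V) : ℕ :=
  sInf {n | ∃ S, IsKDomOn G k U S ∧ S.ncard = n}

/-- The `k`-independence number of the subgraph of `G` induced by `U`. -/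
noncomputable def alphaK {V : Type*} (G : SimpleGraph V) (k : ℕ) (U : Set V) : ℕ :=
  sSup {n | ∃ S, IsKIndOn G k U S ∧ S.ncard = n}

section Aux
variable {V : Type*} [Fintype V] [DecidableEq V]

lemma e_insert_aux (G : SimpleGraph V) [DecidableRel G.Adj] (s : Finset V) (v : V) (hv : v ∉ s) :
    (∑ u ∈ insert v s, ((G.neighborFinset u ∩ insert v s).card : ℤ))
    = (∑ u ∈ s, ((G.neighborFinset u ∩ s).card : ℤ))
      + 2 * (G.neighborFinset v ∩ s).card := by
  rw [Finset.sum_insert hv]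
  have h1 : G.neighborFinset v ∩ insert v s = G.neighborFinset v ∩ s := by
    ext u
    simp only [Finset.mem_inter, Finset.mem_insert, mem_neighborFinset]
    constructor
    · rintro ⟨hadj, h | h⟩
      · exact absurd (h ▸ hadj) (G.irrefl)
      · exact ⟨hadj, h⟩
    · rintro ⟨hadj, h⟩; exact ⟨hadj, Or.inr h⟩
  have h2 : ∀ u ∈ s, ((G.neighborFinset u ∩ insert v s).card : ℤ)
      = (G.neighborFinset u ∩ s).card + (if G.Adj v u then 1 else 0) := by
    intro u hu
    by_cases hadj : G.Adj v u
    · have : G.neighborFinset u ∩ insert v s = insert v (G.neighborFinset u ∩ s) := by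
        ext w
        simp only [Finset.mem_inter, Finset.mem_insert, mem_neighborFinset]
        constructor
        · rintro ⟨hw, h | h⟩
          · exact Or.inl h
          · exact Or.inr ⟨hw, h⟩
        · rintro (h | ⟨hw, h⟩)
          · exact ⟨h ▸ hadj.symm, Or.inl h⟩
          · exact ⟨hw, Or.inr h⟩
      rw [this, Finset.card_insert_of_notMem (by simp [hv]), if_pos hadj]
      push_cast; ring
    · have : G.neighborFinset u ∩ insert v s = G.neighborFinset u ∩ s := by
        ext w
        simp only [Finset.mem_inter, Finset.mem_insert, mem_neighborFinset]
        constructor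
        · rintro ⟨hw, h | h⟩
          · exact absurd (h ▸ hw) (fun h' => hadj h'.symm)
          · exact ⟨hw, h⟩
        · rintro ⟨hw, h⟩; exact ⟨hw, Or.inr h⟩
      rw [this, if_neg hadj, add_zero]
  rw [Finset.sum_congr rfl h2, Finset.sum_add_distrib, h1]
  have h3 : (∑ u ∈ s, (if G.Adj v u then (1:ℤ) else 0)) = (G.neighborFinset v ∩ s).card := by
    have : G.neighborFinset v ∩ s = s.filter (fun u => G.Adj v u) := by
      ext u; simp [mem_neighborFinset, and_comm]
    rw [this, Finset.sum_boole]
  rw [h3]; ring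

end Aux

theorem stmt0 {V : Type*} [Fintype V] (G : SimpleGraph V) (k : ℕ) (hk : 1 ≤ k) :
    ∃ S : Set V, IsKDomOn G k Set.univ S ∧ IsKIndOn G k Set.univ S := by
  classical
  haveI : DecidableRel G.Adj := Classical.decRel _
  set e : Finset V → ℤ := fun s => ∑ u ∈ s, ((G.neighborFinset u ∩ s).card : ℤ) with he
  set g : Finset V → ℤ := fun s => 2 * k * s.card - e s with hg
  obtain ⟨s₀, -, hs₀⟩ := Finset.exists_max_image (Finset.univ : Finset (Finset V)) g
    ⟨∅, Finset.mem_univ ∅⟩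
  obtain ⟨s, hsmem, hsmin⟩ := Finset.exists_min_image
    (Finset.univ.filter (fun t => g s₀ ≤ g t)) Finset.card ⟨s₀, by simp⟩
  have hs₀s : g s₀ ≤ g s := (Finset.mem_filter.mp hsmem).2
  have hgs : ∀ t : Finset V, g t ≤ g s := fun t =>
    le_trans (hs₀ t (Finset.mem_univ t)) hs₀s
  have hcard : ∀ t : Finset V, g s ≤ g t → s.card ≤ t.card := by
    intro t ht
    exact hsmin t (Finset.mem_filter.mpr ⟨Finset.mem_univ t, le_trans hs₀s ht⟩)
  have hins : ∀ (t : Finset V), ∀ v ∉ t,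
      g (insert v t) = g t + 2 * k - 2 * (G.neighborFinset v ∩ t).card := by
    intro t v hv
    simp only [hg, he, e_insert_aux G t v hv, Finset.card_insert_of_notMem hv]
    push_cast; ring
  -- independence
  have hind : ∀ v ∈ s, (G.neighborFinset v ∩ s).card ≤ k - 1 := by
    intro v hv
    by_contra hlt
    have hdk : (k : ℤ) ≤ (G.neighborFinset v ∩ s).card := by
      have : k ≤ (G.neighborFinset v ∩ s).card := by omega
      exact_mod_cast this
    have hvnot : v ∉ s.erase v := Finset.notMem_erase v s
    have hNv : G.neighborFinset v ∩ s.erase v = G.neighborFinset v ∩ s := by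
      ext u
      simp only [Finset.mem_inter, Finset.mem_erase, mem_neighborFinset]
      constructor
      · rintro ⟨h1, _, h3⟩; exact ⟨h1, h3⟩
      · rintro ⟨h1, h2⟩; exact ⟨h1, fun h => G.irrefl (h ▸ h1), h2⟩
    have hgse : g s = g (s.erase v) + 2 * k - 2 * (G.neighborFinset v ∩ s).card := by
      have := hins (s.erase v) v hvnot
      rw [Finset.insert_erase hv, hNv] at this
      rw [this]
    have hge : g s ≤ g (s.erase v) := by omega
    have := hcard _ hge
    have hlt' : (s.erase v).card < s.card := Finset.card_erase_lt_of_mem hv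
    omega
  -- domination
  have hdom : ∀ v ∉ s, k ≤ (G.neighborFinset v ∩ s).card := by
    intro v hv
    by_contra hlt
    have hdk : ((G.neighborFinset v ∩ s).card : ℤ) < k := by
      have : (G.neighborFinset v ∩ s).card < k := by omega
      exact_mod_cast this
    have := hgs (insert v s)
    rw [hins s v hv] at this
    omega
  refine ⟨↑s, ?_, ?_⟩
  · refine ⟨Set.subset_univ _, fun v _ hv => ?_⟩
    have hv' : v ∉ s := fun h => hv (Finset.mem_coe.mpr h)
    have : (G.neighborSet v ∩ (↑s : Set V)).ncard = (G.neighborFinset v ∩ s).card := by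
      rw [← Set.ncard_coe_finset]; congr 1; simp [Finset.coe_inter, SimpleGraph.neighborFinset_def, Set.coe_toFinset]
    rw [this]; exact hdom v hv'
  · refine ⟨Set.subset_univ _, fun v hv => ?_⟩
    have : (G.neighborSet v ∩ (↑s : Set V)).ncard = (G.neighborFinset v ∩ s).card := by
      rw [← Set.ncard_coe_finset]; congr 1; simp [Finset.coe_inter, SimpleGraph.neighborFinset_def, Set.coe_toFinset]
    rw [this]; exact hind v (Finset.mem_coe.mp hv)
end

section
/- For every finite simple graph G and every integer k ≥ 1, the k-domination number satisfies γ_k(G) ≤ α_k(G), where α_k(G) is the k-independence number. -/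
open SimpleGraph

section Aux
set_option linter.unusedSectionVars false

variable {V : Type*} [Fintype V] [DecidableEq V] (G : SimpleGraph V) [DecidableRel G.Adj]

/-- number of neighbors of `v` in `S` -/
private def dS (S : Finset V) (v : V) : ℕ := (S.filter (fun x => G.Adj v x)).card

/-- twice the number of edges inside `S` -/
private def eS (S : Finset V) : ℕ := ∑ x ∈ S, dS G S x

private lemma dS_eq_card_inter (S : Finset V) (v : V) :
    dS G S v = (G.neighborSet v ∩ (S : Set V)).ncard := by
  have h : G.neighborSet v ∩ (S : Set V) = ↑(S.filter (fun x => G.Adj v x)) := by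
    ext x
    simp [Set.mem_inter_iff, SimpleGraph.mem_neighborSet, and_comm]
  rw [h, Set.ncard_coe_finset, dS]

private lemma sumAdjAux (S : Finset V) (v : V) :
    (∑ x ∈ S, (if G.Adj x v then 1 else 0)) = dS G S v := by
  rw [dS, Finset.card_filter]
  apply Finset.sum_congr rfl
  intro x _
  simp [G.adj_comm]

private lemma dS_insert_self (S : Finset V) (v : V) :
    dS G (insert v S) v = dS G S v := by
  simp [dS, Finset.filter_insert, G.irrefl]

private lemma dS_insert (S : Finset V) (v x : V) (hv : v ∉ S) :
    dS G (insert v S) x = dS G S x + (if G.Adj x v then 1 else 0) := by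
  by_cases h : G.Adj x v
  · have hxv : G.Adj x v := h
    have : v ∉ S.filter (fun y => G.Adj x y) := fun hc => hv (Finset.mem_of_mem_filter _ hc)
    simp [dS, Finset.filter_insert, hxv, Finset.card_insert_of_notMem this]
  · simp [dS, Finset.filter_insert, h]

private lemma eS_insert (S : Finset V) (v : V) (hv : v ∉ S) :
    eS G (insert v S) = eS G S + 2 * dS G S v := by
  rw [eS, Finset.sum_insert hv, dS_insert_self]
  have h1 : (∑ x ∈ S, dS G (insert v S) x)
      = ∑ x ∈ S, (dS G S x + (if G.Adj x v then 1 else 0)) := by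
    apply Finset.sum_congr rfl
    intro x _
    exact dS_insert G S v x hv
  rw [h1, Finset.sum_add_distrib, sumAdjAux]
  rw [eS]
  ring

private lemma dS_erase_self (S : Finset V) (x : V) :
    dS G (S.erase x) x = dS G S x := by
  rw [dS, dS, Finset.filter_erase]
  congr 1
  apply Finset.erase_eq_of_notMem
  simp [G.irrefl]

end Aux

theorem stmt1 {V : Type*} [Fintype V] (G : SimpleGraph V) (k : ℕ) (hk : 1 ≤ k) :
    gammaK G k Set.univ ≤ alphaK G k Set.univ := by
  classical
  -- the potential function
  set f : Finset V → ℤ := fun S => 2 * k * S.card - eS G S with hf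
  obtain ⟨M, -, hM⟩ := Finset.exists_max_image (Finset.univ : Finset (Finset V)) f
    ⟨∅, Finset.mem_univ ∅⟩
  obtain ⟨S₀, hS₀T, hmin⟩ := Finset.exists_min_image
    (Finset.univ.filter (fun S : Finset V => f S = f M)) Finset.card
    ⟨M, by simp⟩
  have hfS₀ : f S₀ = f M := (Finset.mem_filter.mp hS₀T).2
  have hmax : ∀ S' : Finset V, f S' ≤ f S₀ := fun S' => hfS₀ ▸ hM S' (Finset.mem_univ _)
  have hcard : ∀ S' : Finset V, f S' = f S₀ → S₀.card ≤ S'.card := by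
    intro S' h
    exact hmin S' (Finset.mem_filter.mpr ⟨Finset.mem_univ _, h.trans hfS₀⟩)
  -- S₀ is k-dominating
  have hdom : ∀ v ∉ S₀, k ≤ dS G S₀ v := by
    intro v hv
    by_contra h
    push_neg at h
    have h1 : f (insert v S₀) = f S₀ + 2 * k - 2 * (dS G S₀ v) := by
      rw [hf]
      simp only
      rw [Finset.card_insert_of_notMem hv, eS_insert G S₀ v hv]
      push_cast
      ring
    have h2 := hmax (insert v S₀)
    rw [h1] at h2
    have h3 : (dS G S₀ v : ℤ) < k := by exact_mod_cast h
    linarith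
  -- S₀ is k-independent
  have hind : ∀ x ∈ S₀, dS G S₀ x < k := by
    intro x hx
    by_contra h
    push_neg at h
    have hxe : x ∉ S₀.erase x := Finset.notMem_erase x S₀
    have hins : insert x (S₀.erase x) = S₀ := Finset.insert_erase hx
    have he2 : eS G S₀ = eS G (S₀.erase x) + 2 * dS G S₀ x := by
      conv_lhs => rw [← hins]
      rw [eS_insert G _ x hxe, dS_erase_self]
    have hc2 : S₀.card = (S₀.erase x).card + 1 := by
      conv_lhs => rw [← hins]
      rw [Finset.card_insert_of_notMem hxe]
    have h1 : f S₀ = f (S₀.erase x) + 2 * k - 2 * (dS G S₀ x) := by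
      rw [hf]
      simp only
      rw [he2, hc2]
      push_cast
      ring
    have h3 : (k : ℤ) ≤ dS G S₀ x := by exact_mod_cast h
    have h4 : f S₀ ≤ f (S₀.erase x) := by linarith [h1]
    have h5 : f (S₀.erase x) = f S₀ := le_antisymm (hmax _) h4
    have h6 := hcard _ h5
    rw [Finset.card_erase_of_mem hx] at h6
    have h7 : 1 ≤ S₀.card := Finset.card_pos.mpr ⟨x, hx⟩
    omega
  -- assemble
  have hSind : IsKIndOn G k Set.univ (↑S₀ : Set V) := by
    refine ⟨Set.subset_univ _, ?_⟩
    intro v hv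
    rw [← dS_eq_card_inter]
    have := hind v (by exact_mod_cast hv)
    omega
  have hSdom : IsKDomOn G k Set.univ (↑S₀ : Set V) := by
    refine ⟨Set.subset_univ _, ?_⟩
    intro v _ hv
    rw [← dS_eq_card_inter]
    exact hdom v (by exact_mod_cast hv)
  have hle : gammaK G k Set.univ ≤ S₀.card := by
    apply Nat.sInf_le
    exact ⟨↑S₀, hSdom, Set.ncard_coe_finset _⟩
  have hge : S₀.card ≤ alphaK G k Set.univ := by
    apply le_csSup
    · refine ⟨(Set.univ : Set V).ncard, ?_⟩
      rintro n ⟨S, _, rfl⟩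
      exact Set.ncard_le_ncard (Set.subset_univ S) Set.finite_univ
    · exact ⟨↑S₀, hSind, Set.ncard_coe_finset _⟩
  exact hle.trans hge
end

section
/- Let T be a finite tree and U a set of vertices of T. If there exist a 2-dominating set D' of the induced subgraph T[U] and a 2-independent set S' of T[U] such that |D'| < |S'| and no vertex of S' is adjacent in T to a vertex outside U, then γ₂(T) < α₂(T). -/
open SimpleGraph

/-!
Favaron's theorem gives a set `B ⊆ Uᶜ` that is both 2-dominating and 2-independent in `T[Uᶜ]`.
Then `D' ∪ B` is 2-dominating in `T`, and `S' ∪ B` is 2-independent in `T` because no edge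
joins `S'` to `B`; hence `γ₂(T) ≤ |D'| + |B| < |S'| + |B| ≤ α₂(T)`.
Favaron's set maximises `(2k - 1)|S| - 2|E(G[S])|` over `S ⊆ W`: adding a vertex with fewer
than `k` neighbours in `S`, or removing one with at least `k`, would increase it.
-/

open Finset

namespace SimpleGraph

variable {V : Type*} (G : SimpleGraph V)

lemma sum_card_filter_adj_insert [DecidableRel G.Adj] [DecidableEq V] {s : Finset V} {v : V}
    (hv : v ∉ s) :
    ∑ x ∈ insert v s, #{y ∈ insert v s | G.Adj x y} =
      ∑ x ∈ s, #{y ∈ s | G.Adj x y} + 2 * #{y ∈ s | G.Adj v y} := by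
  have hstep : ∀ x ∈ s, #{y ∈ insert v s | G.Adj x y} =
      #{y ∈ s | G.Adj x y} + if G.Adj x v then 1 else 0 := by
    intro x _
    rw [filter_insert]
    split_ifs
    · exact card_insert_of_notMem fun h => hv (mem_filter.1 h).1
    · rfl
  rw [sum_insert hv, filter_insert, if_neg G.irrefl, sum_congr rfl hstep,
    sum_add_distrib, sum_boole]
  simp_rw [G.adj_comm _ v]
  push_cast
  ring

lemma neighborSet_inter_coe_ncard [DecidableRel G.Adj] (s : Finset V) (v : V) :
    (G.neighborSet v ∩ ↑s).ncard = #{y ∈ s | G.Adj v y} := by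
  rw [← Set.ncard_coe_finset, coe_filter]
  congr 1
  ext y
  simp [and_comm]

theorem exists_isKDomOn_isKIndOn (k : ℕ) {W : Set V} (hW : W.Finite) :
    ∃ B, IsKDomOn G k W B ∧ IsKIndOn G k W B := by
  classical
  let Φ : Finset V → ℤ := fun s => (2 * k - 1) * #s - ∑ x ∈ s, #{y ∈ s | G.Adj x y}
  obtain ⟨s, hsW, hmax⟩ := exists_max_image hW.toFinset.powerset Φ ⟨∅, empty_mem_powerset _⟩
  rw [mem_powerset, Set.Finite.subset_toFinset] at hsW
  refine ⟨s, ⟨hsW, fun v hvW hvs => ?_⟩, ⟨hsW, fun v hvs => ?_⟩⟩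
  · have hle := hmax (insert v s) (by
      rw [mem_powerset, Set.Finite.subset_toFinset, coe_insert]
      exact Set.insert_subset hvW hsW)
    simp only [Φ, sum_card_filter_adj_insert G hvs, card_insert_of_notMem hvs] at hle
    rw [neighborSet_inter_coe_ncard]
    push_cast at hle
    linarith
  · have hv : v ∉ s.erase v := notMem_erase v s
    have hle := hmax (s.erase v) (by
      rw [mem_powerset, Set.Finite.subset_toFinset]
      exact (coe_subset.2 (erase_subset v s)).trans hsW)
    have hdeg : #{y ∈ s.erase v | G.Adj v y} = #{y ∈ s | G.Adj v y} := by
      rw [filter_erase, erase_eq_of_notMem fun h => G.irrefl (mem_filter.1 h).2]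
    have hsplit : ∑ x ∈ s, #{y ∈ s | G.Adj x y} =
        ∑ x ∈ s.erase v, #{y ∈ s.erase v | G.Adj x y} + 2 * #{y ∈ s | G.Adj v y} := by
      conv_lhs => rw [← insert_erase hvs]
      rw [sum_card_filter_adj_insert G hv, hdeg]
    simp only [Φ, hsplit, ← card_erase_add_one hvs] at hle
    rw [neighborSet_inter_coe_ncard]
    push_cast at hle
    have hdeg_lt : 2 * (#{y ∈ s | G.Adj v y} : ℤ) ≤ 2 * k - 1 := by linarith
    omega

end SimpleGraph

section Union

variable {V : Type*} {G : SimpleGraph V} {k : ℕ} {U W D S B : Set V}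

lemma IsKDomOn.union [Finite V] (hD : IsKDomOn G k U D) (hB : IsKDomOn G k W B) :
    IsKDomOn G k (U ∪ W) (D ∪ B) := by
  refine ⟨Set.union_subset_union hD.1 hB.1, fun v hv hvDB => ?_⟩
  rw [Set.mem_union, not_or] at hvDB
  rcases hv with hvU | hvW
  · exact (hD.2 v hvU hvDB.1).trans
      (Set.ncard_le_ncard (Set.inter_subset_inter_right _ Set.subset_union_left))
  · exact (hB.2 v hvW hvDB.2).trans
      (Set.ncard_le_ncard (Set.inter_subset_inter_right _ Set.subset_union_right))

lemma IsKIndOn.union (hS : IsKIndOn G k U S) (hB : IsKIndOn G k W B)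
    (hSB : ∀ v ∈ S, ∀ w ∈ B, ¬ G.Adj v w) : IsKIndOn G k (U ∪ W) (S ∪ B) := by
  refine ⟨Set.union_subset_union hS.1 hB.1, fun v hv => ?_⟩
  rw [Set.inter_union_distrib_left]
  rcases hv with hvS | hvB
  · have hnone : G.neighborSet v ∩ B = ∅ :=
      Set.eq_empty_of_forall_notMem fun w hw => hSB v hvS w hw.2 hw.1
    rw [hnone, Set.union_empty]
    exact hS.2 v hvS
  · have hnone : G.neighborSet v ∩ S = ∅ :=
      Set.eq_empty_of_forall_notMem fun w hw => hSB w hw.2 v hvB hw.1.symm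
    rw [hnone, Set.empty_union]
    exact hB.2 v hvB

end Union

lemma gammaK_le_ncard {V : Type*} {G : SimpleGraph V} {k : ℕ} {U D : Set V}
    (hD : IsKDomOn G k U D) : gammaK G k U ≤ D.ncard :=
  Nat.sInf_le ⟨D, hD, rfl⟩

lemma ncard_le_alphaK {V : Type*} [Finite V] {G : SimpleGraph V} {k : ℕ} {U S : Set V}
    (hS : IsKIndOn G k U S) : S.ncard ≤ alphaK G k U :=
  le_csSup ⟨Nat.card V, by rintro n ⟨S₀, -, rfl⟩; exact Set.ncard_le_card S₀⟩ ⟨S, hS, rfl⟩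

theorem stmt5_general {V : Type*} [Fintype V] (T : SimpleGraph V)
    (U : Set V) (D' S' : Set V)
    (hD' : IsKDomOn T 2 U D') (hS' : IsKIndOn T 2 U S')
    (hcard : D'.ncard < S'.ncard)
    (hbd : ∀ v ∈ S', ∀ w ∉ U, ¬ T.Adj v w) :
    gammaK T 2 Set.univ < alphaK T 2 Set.univ := by
  obtain ⟨B, hBdom, hBind⟩ := T.exists_isKDomOn_isKIndOn 2 (Set.toFinite Uᶜ)
  have hD : IsKDomOn T 2 Set.univ (D' ∪ B) := by
    simpa only [Set.union_compl_self] using hD'.union hBdom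
  have hS : IsKIndOn T 2 Set.univ (S' ∪ B) := by
    simpa only [Set.union_compl_self] using
      hS'.union hBind fun v hv w hw => hbd v hv w (hBind.1 hw)
  calc gammaK T 2 Set.univ ≤ (D' ∪ B).ncard := gammaK_le_ncard hD
    _ = D'.ncard + B.ncard :=
      Set.ncard_union_eq (Set.disjoint_of_subset hD'.1 hBdom.1 disjoint_compl_right)
    _ < S'.ncard + B.ncard := Nat.add_lt_add_right hcard _
    _ = (S' ∪ B).ncard :=
      (Set.ncard_union_eq (Set.disjoint_of_subset hS'.1 hBind.1 disjoint_compl_right)).symm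
    _ ≤ alphaK T 2 Set.univ := ncard_le_alphaK hS

theorem stmt5 {V : Type*} [Fintype V] (T : SimpleGraph V) (hT : T.IsTree)
    (U : Set V) (D' S' : Set V)
    (hD' : IsKDomOn T 2 U D') (hS' : IsKIndOn T 2 U S')
    (hcard : D'.ncard < S'.ncard)
    (hbd : ∀ v ∈ S', ∀ w ∉ U, ¬ T.Adj v w) :
    gammaK T 2 Set.univ < alphaK T 2 Set.univ :=
  stmt5_general T U D' S' hD' hS' hcard hbd
end

section
/- Let T' be a finite tree containing a vertex v that has two distinct neighbors a and b each of degree 1 in T', and let T be the tree obtained from T' by adding a new vertex u and the edge vu. Then γ₂(T) = γ₂(T') + 1 and α₂(T) = α₂(T') + 1; in particular α₂(T) − γ₂(T) = α₂(T') − γ₂(T'). -/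
open SimpleGraph

/-!
A vertex of degree less than 2 lies in every 2-dominating set. So a minimum 2-dominating set
of `T` contains the new leaf `u = inr ()` and both leaves `a`, `b` at `v`; the latter
2-dominate `v`, so removing `u` leaves a 2-dominating set of `T'`, and conversely adding `u`
to one of `T'` gives one of `T`.

A 2-independent set of `T` restricts to one of `T'` after dropping `u`. Conversely a maximum
2-independent set of `T'` can be chosen to avoid `v`: if it contains `v` it misses `a` or `b`,
and that leaf can replace `v`. Then `u` can be added to it.
-/

open Set Sum

section Sum

variable {α β : Type*}

lemma Set.ncard_image_inl_inter (A : Set α) (S : Set (α ⊕ β)) :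
    (inl '' A ∩ S).ncard = (A ∩ inl ⁻¹' S).ncard := by
  rw [← image_inter_preimage, ncard_image_of_injective _ inl_injective]

lemma Set.preimage_inl_insert_inr_image_inl (A : Set α) :
    inl ⁻¹' insert (inr () : α ⊕ Unit) (inl '' A) = A := by
  ext; simp

lemma Set.insert_inr_image_inl_preimage_inl {S : Set (α ⊕ Unit)} (h : inr () ∈ S) :
    insert (inr ()) (inl '' (inl ⁻¹' S)) = S := by
  ext (x | ⟨⟩) <;> simp [h]

lemma Set.subset_insert_inr_image_inl_preimage_inl (S : Set (α ⊕ Unit)) :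
    S ⊆ insert (inr ()) (inl '' (inl ⁻¹' S)) := by
  rintro (x | ⟨⟩) hx <;> simp [hx]

lemma Set.ncard_insert_inr_image_inl [Finite α] (A : Set α) :
    (insert (inr () : α ⊕ Unit) (inl '' A)).ncard = A.ncard + 1 := by
  rw [ncard_insert_of_notMem (by simp), ncard_image_of_injective _ inl_injective]

end Sum

section General

variable {V : Type*} {G : SimpleGraph V} {k : ℕ}

lemma gammaK_le {U S : Set V} (hS : IsKDomOn G k U S) : gammaK G k U ≤ S.ncard :=
  Nat.sInf_le ⟨S, hS, rfl⟩

lemma exists_isKDomOn_ncard_eq_gammaK (U : Set V) :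
    ∃ S, IsKDomOn G k U S ∧ S.ncard = gammaK G k U := by
  have hU : IsKDomOn G k U U := ⟨subset_rfl, fun _ hx hx' => absurd hx hx'⟩
  exact Nat.sInf_mem (s := {n | ∃ S, IsKDomOn G k U S ∧ S.ncard = n}) ⟨_, U, hU, rfl⟩

lemma bddAbove_ncard_isKIndOn [Finite V] (U : Set V) :
    BddAbove {n | ∃ S, IsKIndOn G k U S ∧ S.ncard = n} :=
  ⟨U.ncard, by rintro _ ⟨S, hS, rfl⟩; exact ncard_le_ncard hS.1⟩

lemma le_alphaK [Finite V] {U S : Set V} (hS : IsKIndOn G k U S) : S.ncard ≤ alphaK G k U :=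
  le_csSup (bddAbove_ncard_isKIndOn U) ⟨S, hS, rfl⟩

lemma exists_isKIndOn_ncard_eq_alphaK [Finite V] (U : Set V) :
    ∃ S, IsKIndOn G k U S ∧ S.ncard = alphaK G k U := by
  apply Nat.sSup_mem _ (bddAbove_ncard_isKIndOn U)
  exact ⟨0, ∅, ⟨empty_subset U, fun _ h => h.elim⟩, ncard_empty V⟩

lemma IsKDomOn.mem_of_ncard_neighborSet_lt [Finite V] {S : Set V}
    (hS : IsKDomOn G k univ S) {x : V} (hx : (G.neighborSet x).ncard < k) : x ∈ S := by
  by_contra hxS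
  have := hS.2 x (mem_univ x) hxS
  have := ncard_inter_le_ncard_left (G.neighborSet x) S
  omega

lemma two_le_ncard_neighborSet_inter [Finite V] {v a b : V} {S : Set V} (hab : a ≠ b)
    (hva : G.Adj v a) (hvb : G.Adj v b) (ha : a ∈ S) (hb : b ∈ S) :
    2 ≤ (G.neighborSet v ∩ S).ncard := by
  rw [← ncard_pair hab]
  exact ncard_le_ncard (by rintro _ (rfl | rfl) <;> simp_all)

lemma SimpleGraph.adj_of_neighborSet_eq_singleton {v w : V} (hw : G.neighborSet w = {v}) :
    G.Adj w v := by
  rw [← mem_neighborSet, hw]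
  rfl

lemma IsKIndOn.insert_diff_singleton [Finite V] {A : Set V} (hA : IsKIndOn G k univ A)
    {v w : V} (hw : G.neighborSet w = {v}) : IsKIndOn G k univ (insert w (A \ {v})) := by
  have hvw : v ≠ w := (adj_of_neighborSet_eq_singleton hw).ne.symm
  refine ⟨subset_univ _, fun x hx => ?_⟩
  rcases mem_insert_iff.mp hx with rfl | ⟨hxA, hxv⟩
  · have : G.neighborSet x ∩ insert x (A \ {v}) = ∅ := by
      rw [hw]; ext; simp +contextual [hvw]
    simp [this]
  · refine le_trans (ncard_le_ncard ?_) (hA.2 x hxA)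
    rintro z ⟨hxz, hz⟩
    rcases mem_insert_iff.mp hz with rfl | hz
    · have : x ∈ G.neighborSet z := hxz.symm
      rw [hw] at this
      exact absurd this hxv
    · exact ⟨hxz, hz.1⟩

lemma IsKIndOn.exists_ncard_eq_notMem [Finite V] {A : Set V} (hA : IsKIndOn G 2 univ A)
    {v a b : V} (hab : a ≠ b) (ha : G.neighborSet a = {v}) (hb : G.neighborSet b = {v}) :
    ∃ B, IsKIndOn G 2 univ B ∧ B.ncard = A.ncard ∧ v ∉ B := by
  by_cases hv : v ∈ A
  · obtain ⟨w, hw, hwA⟩ : ∃ w, G.neighborSet w = {v} ∧ w ∉ A := by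
      by_contra! h
      have := hA.2 v hv
      have := two_le_ncard_neighborSet_inter hab (adj_of_neighborSet_eq_singleton ha).symm
        (adj_of_neighborSet_eq_singleton hb).symm (h a ha) (h b hb)
      omega
    refine ⟨_, hA.insert_diff_singleton hw, ncard_exchange hwA hv, ?_⟩
    simp [(adj_of_neighborSet_eq_singleton hw).ne.symm]
  · exact ⟨A, hA, rfl, hv⟩

end General

structure IsPendantExtension {V : Type*} (T' : SimpleGraph V) (v : V)
    (T : SimpleGraph (V ⊕ Unit)) : Prop where
  adj_inl_inl : ∀ x y, T.Adj (inl x) (inl y) ↔ T'.Adj x y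
  adj_inl_inr : ∀ x, T.Adj (inl x) (inr ()) ↔ x = v

namespace IsPendantExtension

variable {V : Type*} {T' : SimpleGraph V} {v : V} {T : SimpleGraph (V ⊕ Unit)}

lemma neighborSet_inr (hT : IsPendantExtension T' v T) : T.neighborSet (inr ()) = {inl v} := by
  ext (x | ⟨⟩) <;> simp [T.adj_comm (inr ()), hT.adj_inl_inr]

lemma image_inl_neighborSet_subset (hT : IsPendantExtension T' v T) (x : V) :
    inl '' T'.neighborSet x ⊆ T.neighborSet (inl x) := by
  rintro _ ⟨y, hy, rfl⟩
  exact (hT.adj_inl_inl x y).mpr hy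

lemma neighborSet_inl_of_ne (hT : IsPendantExtension T' v T) {x : V} (hx : x ≠ v) :
    T.neighborSet (inl x) = inl '' T'.neighborSet x := by
  ext (y | ⟨⟩) <;> simp [hT.adj_inl_inl, hT.adj_inl_inr, hx]

lemma ncard_neighborSet_inter_preimage_inl_le [Finite V] (hT : IsPendantExtension T' v T)
    (x : V) (S : Set (V ⊕ Unit)) :
    (T'.neighborSet x ∩ inl ⁻¹' S).ncard ≤ (T.neighborSet (inl x) ∩ S).ncard := by
  rw [← ncard_image_inl_inter]
  exact ncard_le_ncard (inter_subset_inter_left S (hT.image_inl_neighborSet_subset x))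

lemma ncard_neighborSet_inl_inter_of_ne (hT : IsPendantExtension T' v T) {x : V} (hx : x ≠ v)
    (S : Set (V ⊕ Unit)) :
    (T.neighborSet (inl x) ∩ S).ncard = (T'.neighborSet x ∩ inl ⁻¹' S).ncard := by
  rw [hT.neighborSet_inl_of_ne hx, ncard_image_inl_inter]

section Domination

variable [Finite V] {k : ℕ}

lemma inr_mem_of_isKDomOn (hT : IsPendantExtension T' v T) {S : Set (V ⊕ Unit)}
    (hS : IsKDomOn T 2 univ S) : inr () ∈ S :=
  hS.mem_of_ncard_neighborSet_lt (by simp [hT.neighborSet_inr])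

lemma inl_mem_of_isKDomOn (hT : IsPendantExtension T' v T) {w : V}
    (hw : T'.neighborSet w = {v}) {S : Set (V ⊕ Unit)} (hS : IsKDomOn T 2 univ S) :
    inl w ∈ S :=
  hS.mem_of_ncard_neighborSet_lt (by
    simp [hT.neighborSet_inl_of_ne (adj_of_neighborSet_eq_singleton hw).ne, hw])

lemma isKDomOn_preimage_inl (hT : IsPendantExtension T' v T) {a b : V} (hab : a ≠ b)
    (ha : T'.neighborSet a = {v}) (hb : T'.neighborSet b = {v}) {S : Set (V ⊕ Unit)}
    (hS : IsKDomOn T 2 univ S) : IsKDomOn T' 2 univ (inl ⁻¹' S) := by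
  refine ⟨subset_univ _, fun x _ hx => ?_⟩
  by_cases hxv : x = v
  · subst hxv
    exact two_le_ncard_neighborSet_inter hab (adj_of_neighborSet_eq_singleton ha).symm
      (adj_of_neighborSet_eq_singleton hb).symm (hT.inl_mem_of_isKDomOn ha hS)
      (hT.inl_mem_of_isKDomOn hb hS)
  · rw [← hT.ncard_neighborSet_inl_inter_of_ne hxv]
    exact hS.2 (inl x) (mem_univ _) hx

lemma isKDomOn_insert_inr_image_inl (hT : IsPendantExtension T' v T) {S : Set V}
    (hS : IsKDomOn T' k univ S) : IsKDomOn T k univ (insert (inr ()) (inl '' S)) := by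
  refine ⟨subset_univ _, fun w _ hw => ?_⟩
  rcases w with x | ⟨⟩
  · have hx : x ∉ S := fun h => hw (mem_insert_of_mem _ (mem_image_of_mem inl h))
    calc k ≤ (T'.neighborSet x ∩ S).ncard := hS.2 x (mem_univ x) hx
      _ = (T'.neighborSet x ∩ inl ⁻¹' insert (inr ()) (inl '' S)).ncard := by
        rw [preimage_inl_insert_inr_image_inl]
      _ ≤ _ := hT.ncard_neighborSet_inter_preimage_inl_le x _
  · exact absurd (mem_insert _ _) hw

lemma gammaK_eq (hT : IsPendantExtension T' v T) {a b : V} (hab : a ≠ b)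
    (ha : T'.neighborSet a = {v}) (hb : T'.neighborSet b = {v}) :
    gammaK T 2 univ = gammaK T' 2 univ + 1 := by
  obtain ⟨S, hS, hScard⟩ := exists_isKDomOn_ncard_eq_gammaK (G := T) (k := 2) univ
  obtain ⟨S', hS', hS'card⟩ := exists_isKDomOn_ncard_eq_gammaK (G := T') (k := 2) univ
  have hle : gammaK T 2 univ ≤ gammaK T' 2 univ + 1 := by
    rw [← hS'card, ← ncard_insert_inr_image_inl]
    exact gammaK_le (hT.isKDomOn_insert_inr_image_inl hS')
  have hge : gammaK T' 2 univ + 1 ≤ gammaK T 2 univ := by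
    rw [← hScard, ← insert_inr_image_inl_preimage_inl (hT.inr_mem_of_isKDomOn hS),
      ncard_insert_inr_image_inl]
    exact Nat.add_le_add_right (gammaK_le (hT.isKDomOn_preimage_inl hab ha hb hS)) 1
  omega

end Domination

section Independence

variable {k : ℕ}

lemma isKIndOn_preimage_inl [Finite V] (hT : IsPendantExtension T' v T) {S : Set (V ⊕ Unit)}
    (hS : IsKIndOn T k univ S) : IsKIndOn T' k univ (inl ⁻¹' S) :=
  ⟨subset_univ _, fun x hx =>
    (hT.ncard_neighborSet_inter_preimage_inl_le x S).trans (hS.2 (inl x) hx)⟩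

lemma isKIndOn_insert_inr_image_inl (hT : IsPendantExtension T' v T) {A : Set V}
    (hA : IsKIndOn T' k univ A) (hv : v ∉ A) :
    IsKIndOn T k univ (insert (inr ()) (inl '' A)) := by
  refine ⟨subset_univ _, fun w hw => ?_⟩
  rcases w with x | ⟨⟩
  · have hx : x ∈ A := by simpa using hw
    rw [hT.ncard_neighborSet_inl_inter_of_ne (ne_of_mem_of_not_mem hx hv),
      preimage_inl_insert_inr_image_inl]
    exact hA.2 x hx
  · have : T.neighborSet (inr ()) ∩ insert (inr ()) (inl '' A) = ∅ := by
      rw [hT.neighborSet_inr]; ext; simp [hv]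
    simp [this]

lemma alphaK_eq [Finite V] (hT : IsPendantExtension T' v T) {a b : V} (hab : a ≠ b)
    (ha : T'.neighborSet a = {v}) (hb : T'.neighborSet b = {v}) :
    alphaK T 2 univ = alphaK T' 2 univ + 1 := by
  obtain ⟨S, hS, hScard⟩ := exists_isKIndOn_ncard_eq_alphaK (G := T) (k := 2) univ
  obtain ⟨A, hA, hAcard⟩ := exists_isKIndOn_ncard_eq_alphaK (G := T') (k := 2) univ
  obtain ⟨B, hB, hBcard, hvB⟩ := hA.exists_ncard_eq_notMem hab ha hb
  have hle : alphaK T 2 univ ≤ alphaK T' 2 univ + 1 :=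
    calc alphaK T 2 univ = S.ncard := hScard.symm
      _ ≤ (inl ⁻¹' S).ncard + 1 := by
        rw [← ncard_insert_inr_image_inl]
        exact ncard_le_ncard (subset_insert_inr_image_inl_preimage_inl S)
      _ ≤ alphaK T' 2 univ + 1 := Nat.add_le_add_right (le_alphaK (hT.isKIndOn_preimage_inl hS)) 1
  have hge : alphaK T' 2 univ + 1 ≤ alphaK T 2 univ := by
    rw [← hAcard, ← hBcard, ← ncard_insert_inr_image_inl]
    exact le_alphaK (hT.isKIndOn_insert_inr_image_inl hB hvB)
  omega

end Independence

end IsPendantExtension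

lemma SimpleGraph.neighborSet_eq_singleton_of_ncard_eq_one {V : Type*} {G : SimpleGraph V}
    {v a : V} (hva : G.Adj v a) (ha : (G.neighborSet a).ncard = 1) : G.neighborSet a = {v} := by
  obtain ⟨c, hc⟩ := ncard_eq_one.mp ha
  have hv : v ∈ G.neighborSet a := hva.symm
  rw [hc, mem_singleton_iff] at hv
  rw [hc, hv]

theorem stmt7_general {V : Type*} [Fintype V] (T' : SimpleGraph V)
    (v a b : V) (hab : a ≠ b) (hva : T'.Adj v a) (hvb : T'.Adj v b)
    (hda : (T'.neighborSet a).ncard = 1) (hdb : (T'.neighborSet b).ncard = 1)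
    (T : SimpleGraph (V ⊕ Unit))
    (hadj : ∀ a b, T.Adj a b ↔
      ((∃ x y, T'.Adj x y ∧ a = Sum.inl x ∧ b = Sum.inl y) ∨
       (a = Sum.inl v ∧ b = (Sum.inr () : V ⊕ Unit)) ∨ (a = (Sum.inr () : V ⊕ Unit) ∧ b = Sum.inl v))) :
    gammaK T 2 Set.univ = gammaK T' 2 Set.univ + 1 ∧
    alphaK T 2 Set.univ = alphaK T' 2 Set.univ + 1 ∧
    (alphaK T 2 Set.univ : ℤ) - (gammaK T 2 Set.univ : ℤ) =
      (alphaK T' 2 Set.univ : ℤ) - (gammaK T' 2 Set.univ : ℤ) := by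
  have hT : IsPendantExtension T' v T := ⟨fun x y => by simp [hadj], fun x => by simp [hadj]⟩
  have ha := neighborSet_eq_singleton_of_ncard_eq_one hva hda
  have hb := neighborSet_eq_singleton_of_ncard_eq_one hvb hdb
  have hγ := hT.gammaK_eq hab ha hb
  have hα := hT.alphaK_eq hab ha hb
  refine ⟨hγ, hα, ?_⟩
  rw [hγ, hα]
  push_cast
  ring

theorem stmt7 {V : Type*} [Fintype V] (T' : SimpleGraph V) (hT' : T'.IsTree)
    (v a b : V) (hab : a ≠ b) (hva : T'.Adj v a) (hvb : T'.Adj v b)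
    (hda : (T'.neighborSet a).ncard = 1) (hdb : (T'.neighborSet b).ncard = 1)
    (T : SimpleGraph (V ⊕ Unit))
    (hadj : ∀ a b, T.Adj a b ↔
      ((∃ x y, T'.Adj x y ∧ a = Sum.inl x ∧ b = Sum.inl y) ∨
       (a = Sum.inl v ∧ b = (Sum.inr () : V ⊕ Unit)) ∨ (a = (Sum.inr () : V ⊕ Unit) ∧ b = Sum.inl v))) :
    gammaK T 2 Set.univ = gammaK T' 2 Set.univ + 1 ∧
    alphaK T 2 Set.univ = alphaK T' 2 Set.univ + 1 ∧
    (alphaK T 2 Set.univ : ℤ) - (gammaK T 2 Set.univ : ℤ) =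
      (alphaK T' 2 Set.univ : ℤ) - (gammaK T' 2 Set.univ : ℤ) :=
  stmt7_general T' v a b hab hva hvb hda hdb T hadj
end

section
/- Let T' be a finite tree containing four distinct vertices a, v, c, w such that v is adjacent to a and c, c is adjacent to w, and in T' the degrees satisfy deg(a) = 1, deg(v) = 2, and deg(c) = 2. Let T be the tree obtained from T' by adding three new vertices u₁, u₂, u₃ with edges u₁u₂, u₂u₃, and vu₁. Then γ₂(T) = γ₂(T') + 2 and α₂(T) = α₂(T') + 2; in particular α₂(T) − γ₂(T) = α₂(T') − γ₂(T'). -/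
open SimpleGraph

private lemma domne_aux {W : Type*} (G : SimpleGraph W) :
    {n | ∃ S, IsKDomOn G 2 Set.univ S ∧ S.ncard = n}.Nonempty :=
  ⟨_, Set.univ, ⟨Set.Subset.rfl, fun z _ hz => absurd (Set.mem_univ z) hz⟩, rfl⟩

private lemma indne_aux {W : Type*} (G : SimpleGraph W) :
    {n | ∃ S, IsKIndOn G 2 Set.univ S ∧ S.ncard = n}.Nonempty :=
  ⟨0, ∅, ⟨Set.empty_subset _, fun z hz => absurd hz (Set.notMem_empty z)⟩,
    Set.ncard_empty _⟩

private lemma indbdd_aux {W : Type*} [Fintype W] (G : SimpleGraph W) :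
    BddAbove {n | ∃ S, IsKIndOn G 2 Set.univ S ∧ S.ncard = n} := by
  refine ⟨(Set.univ : Set W).ncard, ?_⟩
  rintro n ⟨S, _, rfl⟩
  exact Set.ncard_le_ncard (Set.subset_univ S) (Set.toFinite _)

theorem stmt13 {V : Type*} [Fintype V] (T' : SimpleGraph V) (hT' : T'.IsTree)
    (a v c w : V) (hdist : ([a, v, c, w] : List V).Pairwise (· ≠ ·))
    (hva : T'.Adj v a) (hvc : T'.Adj v c) (hcw : T'.Adj c w)
    (hda : (T'.neighborSet a).ncard = 1) (hdv : (T'.neighborSet v).ncard = 2)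
    (hdc : (T'.neighborSet c).ncard = 2)
    (T : SimpleGraph (V ⊕ Fin 3))
    (hadj : ∀ a b, T.Adj a b ↔
      ((∃ x y, T'.Adj x y ∧ a = Sum.inl x ∧ b = Sum.inl y) ∨
       (a = (Sum.inr 0 : V ⊕ Fin 3) ∧ b = Sum.inr 1) ∨ (a = Sum.inr 1 ∧ b = (Sum.inr 0 : V ⊕ Fin 3)) ∨
       (a = (Sum.inr 1 : V ⊕ Fin 3) ∧ b = Sum.inr 2) ∨ (a = Sum.inr 2 ∧ b = (Sum.inr 1 : V ⊕ Fin 3)) ∨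
       (a = Sum.inl v ∧ b = (Sum.inr 0 : V ⊕ Fin 3)) ∨ (a = (Sum.inr 0 : V ⊕ Fin 3) ∧ b = Sum.inl v))) :
    gammaK T 2 Set.univ = gammaK T' 2 Set.univ + 2 ∧
    alphaK T 2 Set.univ = alphaK T' 2 Set.univ + 2 ∧
    (alphaK T 2 Set.univ : ℤ) - (gammaK T 2 Set.univ : ℤ) =
      (alphaK T' 2 Set.univ : ℤ) - (gammaK T' 2 Set.univ : ℤ) := by
  classical
  rw [List.pairwise_cons] at hdist
  obtain ⟨h1, hdist⟩ := hdist
  rw [List.pairwise_cons] at hdist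
  obtain ⟨h2, hdist⟩ := hdist
  rw [List.pairwise_cons] at hdist
  obtain ⟨h3, -⟩ := hdist
  have hav : a ≠ v := h1 v (by simp)
  have hac : a ≠ c := h1 c (by simp)
  have hne_vc : v ≠ c := h2 c (by simp)
  have hne_vw : v ≠ w := h2 w (by simp)
  have hne_cw : c ≠ w := h3 w (by simp)
  -- neighbor sets in T'
  have hNa : T'.neighborSet a = {v} := by
    refine (Set.eq_of_subset_of_ncard_le ?_ ?_ (Set.toFinite _)).symm
    · simp only [Set.singleton_subset_iff, mem_neighborSet]; exact hva.symm
    · rw [hda, Set.ncard_singleton]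
  have hNv : T'.neighborSet v = {a, c} := by
    refine (Set.eq_of_subset_of_ncard_le ?_ ?_ (Set.toFinite _)).symm
    · intro z hz
      rcases hz with h | h
      · subst h; exact hva
      · simp only [Set.mem_singleton_iff] at h; subst h; exact hvc
    · rw [hdv, Set.ncard_pair hac]
  have hNc : T'.neighborSet c = {v, w} := by
    refine (Set.eq_of_subset_of_ncard_le ?_ ?_ (Set.toFinite _)).symm
    · intro z hz
      rcases hz with h | h
      · subst h; exact hvc.symm
      · simp only [Set.mem_singleton_iff] at h; subst h; exact hcw
    · rw [hdc, Set.ncard_pair hne_vw]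
  -- adjacency in T
  have hadj_inl : ∀ x y : V, T.Adj (Sum.inl x) (Sum.inl y) ↔ T'.Adj x y := by
    intro x y
    rw [hadj]
    constructor
    · rintro (⟨p, q, h, hp, hq⟩ | ⟨h, h'⟩ | ⟨h, h'⟩ | ⟨h, h'⟩ | ⟨h, h'⟩ | ⟨h, h'⟩ | ⟨h, h'⟩)
      · injection hp with hp; injection hq with hq; subst hp; subst hq; exact h
      · exact absurd h (by simp)
      · exact absurd h (by simp)
      · exact absurd h (by simp)
      · exact absurd h (by simp)
      · exact absurd h' (by simp)
      · exact absurd h (by simp)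
    · intro h; exact Or.inl ⟨x, y, h, rfl, rfl⟩
  have hadj_ir : ∀ (x : V) (j : Fin 3), T.Adj (Sum.inl x) (Sum.inr j) ↔ (x = v ∧ j = 0) := by
    intro x j
    rw [hadj]
    constructor
    · rintro (⟨p, q, h, hp, hq⟩ | ⟨h, h'⟩ | ⟨h, h'⟩ | ⟨h, h'⟩ | ⟨h, h'⟩ | ⟨h, h'⟩ | ⟨h, h'⟩)
      · exact absurd hq (by simp)
      · exact absurd h (by simp)
      · exact absurd h (by simp)
      · exact absurd h (by simp)
      · exact absurd h (by simp)
      · injection h with h; injection h' with h'; exact ⟨h, h'⟩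
      · exact absurd h (by simp)
    · rintro ⟨rfl, rfl⟩; exact Or.inr (Or.inr (Or.inr (Or.inr (Or.inr (Or.inl ⟨rfl, rfl⟩)))))
  have hN2 : T.neighborSet (Sum.inr 2) = {Sum.inr 1} := by
    ext b
    rw [mem_neighborSet, hadj, Set.mem_singleton_iff]
    constructor
    · rintro (⟨p, q, h, hp, hq⟩ | ⟨h, h'⟩ | ⟨h, h'⟩ | ⟨h, h'⟩ | ⟨h, h'⟩ | ⟨h, h'⟩ | ⟨h, h'⟩)
      · exact absurd hp (by simp)
      · exact absurd h (by simp)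
      · exact absurd h (by simp)
      · exact absurd h (by simp)
      · exact h'
      · exact absurd h (by simp)
      · exact absurd h (by simp)
    · rintro rfl; exact Or.inr (Or.inr (Or.inr (Or.inr (Or.inl ⟨rfl, rfl⟩))))
  have hN1 : T.neighborSet (Sum.inr 1) = {Sum.inr 0, Sum.inr 2} := by
    ext b
    rw [mem_neighborSet, hadj, Set.mem_insert_iff, Set.mem_singleton_iff]
    constructor
    · rintro (⟨p, q, h, hp, hq⟩ | ⟨h, h'⟩ | ⟨h, h'⟩ | ⟨h, h'⟩ | ⟨h, h'⟩ | ⟨h, h'⟩ | ⟨h, h'⟩)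
      · exact absurd hp (by simp)
      · exact absurd h (by simp)
      · exact Or.inl h'
      · exact Or.inr h'
      · exact absurd h (by simp)
      · exact absurd h (by simp)
      · exact absurd h (by simp)
    · rintro (rfl | rfl)
      · exact Or.inr (Or.inr (Or.inl ⟨rfl, rfl⟩))
      · exact Or.inr (Or.inr (Or.inr (Or.inl ⟨rfl, rfl⟩)))
  have hNinl : ∀ x : V, x ≠ v → T.neighborSet (Sum.inl x) = Sum.inl '' T'.neighborSet x := by
    intro x hx
    ext b
    rcases b with y | j
    · simp only [mem_neighborSet, hadj_inl, Set.mem_image, Sum.inl.injEq]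
      constructor
      · intro h; exact ⟨y, h, rfl⟩
      · rintro ⟨z, hz, rfl⟩; exact hz
    · simp only [mem_neighborSet, hadj_ir, Set.mem_image]
      constructor
      · rintro ⟨rfl, rfl⟩; exact absurd rfl hx
      · rintro ⟨z, _, h⟩; exact absurd h (by simp)
  -- counting helper
  have key : ∀ (N : Set V) (S : Set (V ⊕ Fin 3)),
      ((Sum.inl '' N) ∩ S).ncard = (N ∩ Sum.inl ⁻¹' S).ncard := by
    intro N S
    rw [← Set.image_inter_preimage Sum.inl N S,
      Set.ncard_image_of_injective _ Sum.inl_injective]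
  -- ======== gammaK T ≤ gammaK T' + 2 ========
  have hg1 : gammaK T 2 Set.univ ≤ gammaK T' 2 Set.univ + 2 := by
    obtain ⟨S', hS', hcard'⟩ := Nat.sInf_mem (domne_aux T')
    have hcardg : S'.ncard = gammaK T' 2 Set.univ := hcard'
    set Sb : Set (V ⊕ Fin 3) := Sum.inl '' S' ∪ {Sum.inr 0, Sum.inr 2} with hSb
    have hdisj : Disjoint (Sum.inl '' S') ({Sum.inr 0, Sum.inr 2} : Set (V ⊕ Fin 3)) := by
      rw [Set.disjoint_left]
      rintro b ⟨x, _, rfl⟩ (h | h) <;> simp at h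
    have hcardSb : Sb.ncard = S'.ncard + 2 := by
      rw [hSb, Set.ncard_union_eq hdisj (Set.toFinite _) (Set.toFinite _),
        Set.ncard_image_of_injective _ Sum.inl_injective, Set.ncard_pair (by simp)]
    have hdom : IsKDomOn T 2 Set.univ Sb := by
      refine ⟨Set.subset_univ _, ?_⟩
      rintro (x | j) _ hz
      · have hx : x ∉ S' := fun h => hz (Or.inl ⟨x, h, rfl⟩)
        have h2 := hS'.2 x (Set.mem_univ x) hx
        calc (2 : ℕ) ≤ (T'.neighborSet x ∩ S').ncard := h2
          _ = (Sum.inl '' (T'.neighborSet x ∩ S')).ncard :=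
              (Set.ncard_image_of_injective _ Sum.inl_injective).symm
          _ ≤ (T.neighborSet (Sum.inl x) ∩ Sb).ncard := by
              refine Set.ncard_le_ncard ?_ (Set.toFinite _)
              rintro b ⟨y, ⟨hy1, hy2⟩, rfl⟩
              exact ⟨(hadj_inl x y).2 hy1, Or.inl ⟨y, hy2, rfl⟩⟩
      · fin_cases j
        · exact absurd (Or.inr (Or.inl rfl)) hz
        · calc (2 : ℕ) = ({Sum.inr 0, Sum.inr 2} : Set (V ⊕ Fin 3)).ncard :=
                (Set.ncard_pair (by simp)).symm
            _ ≤ (T.neighborSet (Sum.inr 1) ∩ Sb).ncard := by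
                refine Set.ncard_le_ncard ?_ (Set.toFinite _)
                rintro b (rfl | rfl)
                · exact ⟨by rw [hN1]; exact Or.inl rfl, Or.inr (Or.inl rfl)⟩
                · exact ⟨by rw [hN1]; exact Or.inr rfl, Or.inr (Or.inr rfl)⟩
        · exact absurd (Or.inr (Or.inr rfl)) hz
    have : gammaK T 2 Set.univ ≤ Sb.ncard := Nat.sInf_le ⟨Sb, hdom, rfl⟩
    omega
  -- ======== gammaK T' + 2 ≤ gammaK T ========
  have hg2 : gammaK T' 2 Set.univ + 2 ≤ gammaK T 2 Set.univ := by
    obtain ⟨S, hS, hcardS⟩ := Nat.sInf_mem (domne_aux T)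
    have hcardg : S.ncard = gammaK T 2 Set.univ := hcardS
    set S0 : Set V := Sum.inl ⁻¹' S with hS0
    have hinr2 : (Sum.inr 2 : V ⊕ Fin 3) ∈ S := by
      by_contra h
      have h2 := hS.2 _ (Set.mem_univ _) h
      have : (T.neighborSet (Sum.inr 2) ∩ S).ncard ≤ 1 := by
        rw [hN2]
        calc (({Sum.inr 1} : Set (V ⊕ Fin 3)) ∩ S).ncard
            ≤ ({Sum.inr 1} : Set (V ⊕ Fin 3)).ncard :=
              Set.ncard_le_ncard Set.inter_subset_left (Set.toFinite _)
          _ = 1 := Set.ncard_singleton _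
      omega
    have hinr01 : (Sum.inr 0 : V ⊕ Fin 3) ∈ S ∨ (Sum.inr 1 : V ⊕ Fin 3) ∈ S := by
      by_contra h
      push_neg at h
      have h2 := hS.2 _ (Set.mem_univ _) h.2
      have : (T.neighborSet (Sum.inr 1) ∩ S).ncard ≤ 1 := by
        rw [hN1]
        calc (({Sum.inr 0, Sum.inr 2} : Set (V ⊕ Fin 3)) ∩ S).ncard
            ≤ ({Sum.inr 2} : Set (V ⊕ Fin 3)).ncard := by
              refine Set.ncard_le_ncard ?_ (Set.toFinite _)
              rintro b ⟨(rfl | rfl), hb⟩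
              · exact absurd hb h.1
              · exact rfl
          _ = 1 := Set.ncard_singleton _
      omega
    have hvac : Sum.inl v ∉ S → a ∈ S0 ∧ c ∈ S0 := by
      intro hv
      constructor
      · by_contra h
        have h2 := hS.2 _ (Set.mem_univ (Sum.inl a)) h
        have : (T.neighborSet (Sum.inl a) ∩ S).ncard = 0 := by
          rw [hNinl a hav, hNa]
          have he : (Sum.inl '' ({v} : Set V)) ∩ S = ∅ := by
            ext b
            simp only [Set.image_singleton, Set.mem_inter_iff, Set.mem_singleton_iff,
              Set.mem_empty_iff_false, iff_false, not_and]
            rintro rfl; exact hv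
          rw [he, Set.ncard_empty]
        omega
      · by_contra h
        have h2 := hS.2 _ (Set.mem_univ (Sum.inl c)) h
        have : (T.neighborSet (Sum.inl c) ∩ S).ncard ≤ 1 := by
          rw [hNinl c (Ne.symm hne_vc), hNc]
          calc ((Sum.inl '' ({v, w} : Set V)) ∩ S).ncard
              ≤ ({Sum.inl w} : Set (V ⊕ Fin 3)).ncard := by
                refine Set.ncard_le_ncard ?_ (Set.toFinite _)
                rintro b ⟨⟨y, (rfl | rfl), rfl⟩, hb⟩
                · exact absurd hb hv
                · exact rfl
            _ = 1 := Set.ncard_singleton _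
        omega
    have hdom0 : IsKDomOn T' 2 Set.univ S0 := by
      refine ⟨Set.subset_univ _, ?_⟩
      intro x _ hx
      by_cases hxv : x = v
      · subst hxv
        obtain ⟨ha0, hc0⟩ := hvac hx
        refine le_trans (le_of_eq (Set.ncard_pair hac).symm)
          (Set.ncard_le_ncard ?_ (Set.toFinite _))
        rintro b (rfl | rfl)
        · exact ⟨by rw [hNv]; exact Set.mem_insert _ _, ha0⟩
        · exact ⟨by rw [hNv]; exact Set.mem_insert_of_mem _ rfl, hc0⟩
      · have h2 := hS.2 _ (Set.mem_univ (Sum.inl x)) hx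
        rw [hNinl x hxv, key] at h2
        exact h2
    have hcount : S0.ncard + 2 ≤ S.ncard := by
      rcases hinr01 with h01 | h01
      · have hsub : Sum.inl '' S0 ∪ {Sum.inr 0, Sum.inr 2} ⊆ S := by
          rintro b (⟨x, hx, rfl⟩ | rfl | rfl)
          · exact hx
          · exact h01
          · exact hinr2
        have hdj : Disjoint (Sum.inl '' S0) ({Sum.inr 0, Sum.inr 2} : Set (V ⊕ Fin 3)) := by
          rw [Set.disjoint_left]
          rintro b ⟨x, _, rfl⟩ (h | h) <;> simp at h
        calc S0.ncard + 2 = (Sum.inl '' S0 ∪ {Sum.inr 0, Sum.inr 2}).ncard := by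
              rw [Set.ncard_union_eq hdj (Set.toFinite _) (Set.toFinite _),
                Set.ncard_image_of_injective _ Sum.inl_injective, Set.ncard_pair (by simp)]
          _ ≤ S.ncard := Set.ncard_le_ncard hsub (Set.toFinite _)
      · have hsub : Sum.inl '' S0 ∪ {Sum.inr 1, Sum.inr 2} ⊆ S := by
          rintro b (⟨x, hx, rfl⟩ | rfl | rfl)
          · exact hx
          · exact h01
          · exact hinr2
        have hdj : Disjoint (Sum.inl '' S0) ({Sum.inr 1, Sum.inr 2} : Set (V ⊕ Fin 3)) := by
          rw [Set.disjoint_left]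
          rintro b ⟨x, _, rfl⟩ (h | h) <;> simp at h
        calc S0.ncard + 2 = (Sum.inl '' S0 ∪ {Sum.inr 1, Sum.inr 2}).ncard := by
              rw [Set.ncard_union_eq hdj (Set.toFinite _) (Set.toFinite _),
                Set.ncard_image_of_injective _ Sum.inl_injective, Set.ncard_pair (by simp)]
          _ ≤ S.ncard := Set.ncard_le_ncard hsub (Set.toFinite _)
    have : gammaK T' 2 Set.univ ≤ S0.ncard := Nat.sInf_le ⟨S0, hdom0, rfl⟩
    omega
  -- ======== alphaK T' + 2 ≤ alphaK T ========
  have ha1 : alphaK T' 2 Set.univ + 2 ≤ alphaK T 2 Set.univ := by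
    obtain ⟨S', hS', hcard'⟩ := Nat.sSup_mem (indne_aux T') (indbdd_aux T')
    have hcardg : S'.ncard = alphaK T' 2 Set.univ := hcard'
    set Sb : Set (V ⊕ Fin 3) := Sum.inl '' S' ∪ {Sum.inr 1, Sum.inr 2} with hSb
    have hdisj : Disjoint (Sum.inl '' S') ({Sum.inr 1, Sum.inr 2} : Set (V ⊕ Fin 3)) := by
      rw [Set.disjoint_left]
      rintro b ⟨x, _, rfl⟩ (h | h) <;> simp at h
    have hcardSb : Sb.ncard = S'.ncard + 2 := by
      rw [hSb, Set.ncard_union_eq hdisj (Set.toFinite _) (Set.toFinite _),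
        Set.ncard_image_of_injective _ Sum.inl_injective, Set.ncard_pair (by simp)]
    have hind : IsKIndOn T 2 Set.univ Sb := by
      refine ⟨Set.subset_univ _, ?_⟩
      rintro (x | j) hz
      · have hx : x ∈ S' := by
          rcases hz with ⟨y, hy, h⟩ | h | h
          · rwa [← Sum.inl_injective h]
          · exact absurd h (by simp)
          · exact absurd h (by simp)
        have h1 := hS'.2 x hx
        calc (T.neighborSet (Sum.inl x) ∩ Sb).ncard
            ≤ (Sum.inl '' (T'.neighborSet x ∩ S')).ncard := by
              refine Set.ncard_le_ncard ?_ (Set.toFinite _)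
              rintro b ⟨hb1, hb2⟩
              rcases hb2 with ⟨y, hy, rfl⟩ | rfl | rfl
              · rw [mem_neighborSet, hadj_inl] at hb1
                exact ⟨y, ⟨hb1, hy⟩, rfl⟩
              · rw [mem_neighborSet, hadj_ir] at hb1
                exact absurd hb1.2 (by decide)
              · rw [mem_neighborSet, hadj_ir] at hb1
                exact absurd hb1.2 (by decide)
          _ = (T'.neighborSet x ∩ S').ncard :=
              Set.ncard_image_of_injective _ Sum.inl_injective
          _ ≤ 2 - 1 := h1
      · fin_cases j
        · exfalso
          rcases hz with ⟨y, _, h⟩ | h | h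
          · exact absurd h (by simp)
          · exact absurd h (by simp)
          · exact absurd h (by simp)
        · calc (T.neighborSet (Sum.inr 1) ∩ Sb).ncard
              ≤ ({Sum.inr 2} : Set (V ⊕ Fin 3)).ncard := by
                refine Set.ncard_le_ncard ?_ (Set.toFinite _)
                rintro b ⟨hb1, hb2⟩
                rw [hN1] at hb1
                rcases hb1 with rfl | rfl
                · exfalso
                  rcases hb2 with ⟨y, _, h⟩ | h | h
                  · exact absurd h (by simp)
                  · exact absurd h (by simp)
                  · exact absurd h (by simp)
                · rfl
            _ = 1 := Set.ncard_singleton _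
        · calc (T.neighborSet (Sum.inr 2) ∩ Sb).ncard
              ≤ ({Sum.inr 1} : Set (V ⊕ Fin 3)).ncard := by
                rw [hN2]
                exact Set.ncard_le_ncard Set.inter_subset_left (Set.toFinite _)
            _ = 1 := Set.ncard_singleton _
    have : Sb.ncard ≤ alphaK T 2 Set.univ := le_csSup (indbdd_aux T) ⟨Sb, hind, rfl⟩
    omega
  -- ======== alphaK T ≤ alphaK T' + 2 ========
  have ha2 : alphaK T 2 Set.univ ≤ alphaK T' 2 Set.univ + 2 := by
    obtain ⟨S, hS, hcardS⟩ := Nat.sSup_mem (indne_aux T) (indbdd_aux T)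
    have hcardg : S.ncard = alphaK T 2 Set.univ := hcardS
    set S0 : Set V := Sum.inl ⁻¹' S with hS0
    have hind0 : IsKIndOn T' 2 Set.univ S0 := by
      refine ⟨Set.subset_univ _, ?_⟩
      intro x hx
      have h1 := hS.2 (Sum.inl x) hx
      calc (T'.neighborSet x ∩ S0).ncard
          = ((Sum.inl '' T'.neighborSet x) ∩ S).ncard := (key _ _).symm
        _ ≤ (T.neighborSet (Sum.inl x) ∩ S).ncard := by
            refine Set.ncard_le_ncard (Set.inter_subset_inter_left _ ?_) (Set.toFinite _)
            rintro b ⟨y, hy, rfl⟩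
            exact (hadj_inl x y).2 hy
        _ ≤ 2 - 1 := h1
    have hmiss : (Sum.inr 0 : V ⊕ Fin 3) ∉ S ∨ (Sum.inr 1 : V ⊕ Fin 3) ∉ S ∨
        (Sum.inr 2 : V ⊕ Fin 3) ∉ S := by
      by_contra h
      push_neg at h
      obtain ⟨h0, h1, h2⟩ := h
      have hle := hS.2 (Sum.inr 1) h1
      have : (2 : ℕ) ≤ (T.neighborSet (Sum.inr 1) ∩ S).ncard := by
        calc (2 : ℕ) = ({Sum.inr 0, Sum.inr 2} : Set (V ⊕ Fin 3)).ncard :=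
            (Set.ncard_pair (by simp)).symm
          _ ≤ _ := by
            refine Set.ncard_le_ncard ?_ (Set.toFinite _)
            rintro b (rfl | rfl)
            · exact ⟨by rw [hN1]; exact Or.inl rfl, h0⟩
            · exact ⟨by rw [hN1]; exact Or.inr rfl, h2⟩
      omega
    have hcount : S.ncard ≤ S0.ncard + 2 := by
      have hgen : ∀ b1 b2 : V ⊕ Fin 3, S ⊆ Sum.inl '' S0 ∪ {b1, b2} →
          S.ncard ≤ S0.ncard + 2 := by
        intro b1 b2 hsub
        calc S.ncard ≤ (Sum.inl '' S0 ∪ {b1, b2}).ncard :=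
            Set.ncard_le_ncard hsub (Set.toFinite _)
          _ ≤ (Sum.inl '' S0).ncard + ({b1, b2} : Set (V ⊕ Fin 3)).ncard :=
            Set.ncard_union_le _ _
          _ ≤ S0.ncard + 2 := by
            rw [Set.ncard_image_of_injective _ Sum.inl_injective]
            have hb : ({b1, b2} : Set (V ⊕ Fin 3)).ncard ≤ 2 := by
              calc ({b1, b2} : Set (V ⊕ Fin 3)).ncard ≤ ({b2} : Set (V ⊕ Fin 3)).ncard + 1 :=
                  Set.ncard_insert_le _ _
                _ ≤ 2 := by rw [Set.ncard_singleton]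
            omega
      rcases hmiss with h | h | h
      · refine hgen (Sum.inr 1) (Sum.inr 2) ?_
        rintro (x | j) hb
        · exact Or.inl ⟨x, hb, rfl⟩
        · fin_cases j
          · exact absurd hb h
          · exact Or.inr (Or.inl rfl)
          · exact Or.inr (Or.inr rfl)
      · refine hgen (Sum.inr 0) (Sum.inr 2) ?_
        rintro (x | j) hb
        · exact Or.inl ⟨x, hb, rfl⟩
        · fin_cases j
          · exact Or.inr (Or.inl rfl)
          · exact absurd hb h
          · exact Or.inr (Or.inr rfl)
      · refine hgen (Sum.inr 0) (Sum.inr 1) ?_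
        rintro (x | j) hb
        · exact Or.inl ⟨x, hb, rfl⟩
        · fin_cases j
          · exact Or.inr (Or.inl rfl)
          · exact Or.inr (Or.inr rfl)
          · exact absurd hb h
    have : S0.ncard ≤ alphaK T' 2 Set.univ := le_csSup (indbdd_aux T') ⟨S0, hind0, rfl⟩
    omega
  refine ⟨by omega, by omega, by push_cast; omega⟩
end
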